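/- arXiv:2311.12417 — 3 statements merged into one kernel-verified Lean document; each statement's English description precedes it below -/
import Mathlib

section
/- Let $G$ be an $r$-regular connected graph with $3\leq k<r$, and suppose there exists $S\subseteq V(G)$ with $c(G-S)\geq (k-2)|S|+3$. Then at least four components $H$ of $G-S$ satisfy $e_G(V(H),S)<\lceil r/(k-2)\rceil$. -/
/-!
Put `t = ⌈r/(k-2)⌉`, so that `r ≤ (k-2) t`. Since `G` is connected, every component of `G - S`
sends at least one edge to `S`, while at most `r |S| ≤ (k-2) t |S|` edges reach `S` in total.
If at most three components sent fewer than `t` edges to `S`, the remaining components, at least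
`(k-2)|S|` of them, would already account for `(k-2) t |S|` edges, leaving no room for the
small components; and if there are no small components, there are at least `(k-2)|S| + 3`
components with `t` edges each, which is too many.
-/

open SimpleGraph
open scoped Function

/-- The number of edges of `G` with one endpoint in `X` and the other in `S`
(for disjoint `X` and `S`). -/
noncomputable def eBetween {V : Type*} [Fintype V] (G : SimpleGraph V) (X S : Set V) : ℕ :=
  {p : V × V | p.1 ∈ X ∧ p.2 ∈ S ∧ G.Adj p.1 p.2}.ncard

section EdgeCount

variable {V : Type*} [Fintype V] (G : SimpleGraph V)

lemma eBetween_iUnion {ι : Type*} [Finite ι] {X : ι → Set V} (hX : Pairwise (Disjoint on X))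
    (S : Set V) : eBetween G (⋃ i, X i) S = ∑ᶠ i, eBetween G (X i) S := by
  have hset : {p : V × V | p.1 ∈ ⋃ i, X i ∧ p.2 ∈ S ∧ G.Adj p.1 p.2} =
      ⋃ i, {p : V × V | p.1 ∈ X i ∧ p.2 ∈ S ∧ G.Adj p.1 p.2} := by
    ext p
    simp only [Set.mem_iUnion, Set.mem_ofPred_eq, exists_and_right]
  rw [eBetween, hset, Set.ncard_iUnion_of_finite (fun _ => Set.toFinite _)]
  · rfl
  · exact fun i j hij => Set.disjoint_left.mpr fun p hi hj =>
      Set.disjoint_left.mp (hX hij) hi.1 hj.1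

lemma eBetween_le_sum_degree [DecidableRel G.Adj] (X : Set V) (S : Finset V) :
    eBetween G X S ≤ ∑ s ∈ S, G.degree s := by
  have hsub : {p : V × V | p.1 ∈ X ∧ p.2 ∈ (S : Set V) ∧ G.Adj p.1 p.2} ⊆
      ⋃ s ∈ S, (fun v => (v, s)) '' G.neighborSet s := by
    rintro ⟨v, s⟩ ⟨-, hs, hadj⟩
    exact Set.mem_biUnion hs ⟨v, hadj.symm, rfl⟩
  calc eBetween G X S
      ≤ (⋃ s ∈ S, (fun v => (v, s)) '' G.neighborSet s).ncard := Set.ncard_le_ncard hsub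
    _ ≤ ∑ s ∈ S, ((fun v => (v, s)) '' G.neighborSet s).ncard := S.set_ncard_biUnion_le _
    _ = ∑ s ∈ S, G.degree s := by
      refine Finset.sum_congr rfl fun s _ => ?_
      rw [Set.ncard_image_of_injective _ (Prod.mk_left_injective s), Set.ncard_eq_toFinset_card',
        Set.toFinset_card, card_neighborSet_eq_degree]

lemma finsum_eBetween_supp_induce_compl_le [DecidableRel G.Adj] (S : Finset V) :
    ∑ᶠ c : (G.induce (S : Set V)ᶜ).ConnectedComponent, eBetween G (Subtype.val '' c.supp) S ≤
      ∑ s ∈ S, G.degree s := by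
  rw [← eBetween_iUnion]
  · exact eBetween_le_sum_degree G _ S
  · exact fun c c' h => (Set.disjoint_image_iff Subtype.val_injective).mpr
      (pairwise_disjoint_supp_connectedComponent _ h)

variable {G}

lemma SimpleGraph.Preconnected.eBetween_supp_induce_compl_pos (hG : G.Preconnected) {S : Set V}
    (hS : S.Nonempty) (c : (G.induce Sᶜ).ConnectedComponent) :
    0 < eBetween G (Subtype.val '' c.supp) S := by
  induction c using ConnectedComponent.ind with | h u => ?_
  obtain ⟨s, hs⟩ := hS
  obtain ⟨w⟩ := hG u s
  obtain ⟨d, -, ⟨x, hx, hxd⟩, hd⟩ := w.exists_boundary_dart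
    (Subtype.val '' ((G.induce Sᶜ).connectedComponentMk u).supp)
    ⟨u, (ConnectedComponent.mem_supp_iff _ _).2 rfl, rfl⟩ fun ⟨v, _, hv⟩ => v.2 (hv ▸ hs)
  have hdS : d.snd ∈ S := by
    by_contra hdS
    refine hd ⟨⟨d.snd, hdS⟩, ?_, rfl⟩
    rw [ConnectedComponent.mem_supp_iff] at hx ⊢
    rw [← hx]
    exact ConnectedComponent.connectedComponentMk_eq_of_adj (by simpa [hxd] using d.adj.symm)
  exact (Set.ncard_pos (Set.toFinite _)).mpr ⟨(d.fst, d.snd), ⟨x, hx, hxd⟩, hdS, d.adj⟩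

lemma SimpleGraph.Connected.nonempty_of_one_lt_card_connectedComponent_induce_compl
    (hG : G.Connected) {S : Finset V}
    (h : 1 < Nat.card (G.induce (S : Set V)ᶜ).ConnectedComponent) : S.Nonempty := by
  rw [Finset.nonempty_iff_ne_empty]
  rintro rfl
  rw [Finset.coe_empty, Set.compl_empty] at h
  have := Finite.card_le_one_iff_subsingleton.mpr
    ((induceUnivIso G).connected_iff.mpr hG).preconnected.subsingleton_connectedComponent
  omega

end EdgeCount

lemma lt_card_setOf_lt_of_finsum_le {ι : Type*} [Finite ι] {f : ι → ℕ} {m n s t : ℕ}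
    (hn : 0 < n) (hf : ∀ i, 0 < f i) (hsum : ∑ᶠ i, f i ≤ m * t * s)
    (hcard : m * s + n ≤ Nat.card ι) : n < Nat.card {i | f i < t} := by
  classical
  have := Fintype.ofFinite ι
  rw [finsum_eq_sum_of_fintype] at hsum
  simp only [Nat.card_eq_fintype_card, Set.coe_ofPred, Fintype.card_subtype] at hcard ⊢
  set P := Finset.univ.filter fun i => f i < t
  set Q := Finset.univ.filter fun i => ¬ f i < t
  have hPQ : P.card + Q.card = Fintype.card ι := Finset.card_filter_add_card_filter_not _
  have hsplit : ∑ i ∈ P, f i + ∑ i ∈ Q, f i = ∑ i, f i :=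
    Finset.sum_filter_add_sum_filter_not _ _ _
  have hP : P.card ≤ ∑ i ∈ P, f i := by
    simpa using Finset.card_nsmul_le_sum P f 1 fun i _ => hf i
  have hQ : Q.card * t ≤ ∑ i ∈ Q, f i := by
    simpa using Finset.card_nsmul_le_sum Q f t fun i hi => not_lt.mp (Finset.mem_filter.mp hi).2
  by_contra! h
  rcases Nat.eq_zero_or_pos t with rfl | ht
  · have hQ' : Q.card ≤ ∑ i ∈ Q, f i := by
      simpa using Finset.card_nsmul_le_sum Q f 1 fun i _ => hf i
    omega
  have h1 : (m * s + n) * t ≤ (P.card + Q.card) * t := Nat.mul_le_mul_right t (hPQ ▸ hcard)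
  have h2 : P.card * t ≤ n * t := Nat.mul_le_mul_right t h
  have h3 : 0 < n * t := Nat.mul_pos hn ht
  nlinarith

lemma le_mul_natCeil_div (r : ℕ) {d : ℕ} (hd : 0 < d) : r ≤ d * ⌈(r : ℚ) / d⌉₊ := by
  have h := Nat.le_ceil ((r : ℚ) / d)
  rw [div_le_iff₀ (by positivity)] at h
  exact_mod_cast h.trans_eq (mul_comm _ _)

theorem four_components_few_edges_general {V : Type*} [Fintype V]
    (G : SimpleGraph V) [DecidableRel G.Adj] (r k : ℕ) (hk : 3 ≤ k)
    (hconn : G.Connected) (hreg : G.IsRegularOfDegree r) (S : Finset V)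
    (hc : (k - 2) * S.card + 3 ≤
      Nat.card (SimpleGraph.induce ((↑S : Set V)ᶜ) G).ConnectedComponent) :
    4 ≤ Nat.card {c : (SimpleGraph.induce ((↑S : Set V)ᶜ) G).ConnectedComponent |
      (eBetween G (Subtype.val '' c.supp) ↑S : ℤ) < ⌈(r : ℚ) / ((k : ℚ) - 2)⌉} := by
  have hS : (S : Set V).Nonempty := Finset.coe_nonempty.mpr
    (hconn.nonempty_of_one_lt_card_connectedComponent_induce_compl (by omega))
  have hk2 : ((k - 2 : ℕ) : ℚ) = (k : ℚ) - 2 := by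
    rw [Nat.cast_sub (by omega)]; norm_num
  have hrt : r ≤ (k - 2) * ⌈(r : ℚ) / ((k : ℚ) - 2)⌉₊ := hk2 ▸ le_mul_natCeil_div r (by omega)
  have hceil : (⌈(r : ℚ) / ((k : ℚ) - 2)⌉₊ : ℤ) = ⌈(r : ℚ) / ((k : ℚ) - 2)⌉ :=
    Int.natCast_ceil_eq_ceil (by rw [← hk2]; positivity)
  have hsum := calc
    ∑ᶠ c : (G.induce (S : Set V)ᶜ).ConnectedComponent, eBetween G (Subtype.val '' c.supp) S
      ≤ ∑ s ∈ S, G.degree s := finsum_eBetween_supp_induce_compl_le G S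
    _ = r * S.card := by simp [hreg.degree_eq, mul_comm]
    _ ≤ (k - 2) * ⌈(r : ℚ) / ((k : ℚ) - 2)⌉₊ * S.card := Nat.mul_le_mul_right _ hrt
  simp_rw [← hceil, Nat.cast_lt]
  exact lt_card_setOf_lt_of_finsum_le three_pos
    (hconn.preconnected.eBetween_supp_induce_compl_pos hS) hsum hc

/-- If `G` is a connected `r`-regular graph with `3 ≤ k < r` and `c(G-S) ≥ (k-2)|S| + 3`,
then at least four components `H` of `G - S` satisfy `e_G(V(H), S) < ⌈r/(k-2)⌉`. -/
theorem four_components_few_edges {V : Type*} [Fintype V] [DecidableEq V]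
    (G : SimpleGraph V) [DecidableRel G.Adj] (r k : ℕ) (hk : 3 ≤ k) (hkr : k < r)
    (hconn : G.Connected) (hreg : G.IsRegularOfDegree r) (S : Finset V)
    (hc : (k - 2) * S.card + 3 ≤
      Nat.card (SimpleGraph.induce ((↑S : Set V)ᶜ) G).ConnectedComponent) :
    4 ≤ Nat.card {c : (SimpleGraph.induce ((↑S : Set V)ᶜ) G).ConnectedComponent |
      (eBetween G (Subtype.val '' c.supp) ↑S : ℤ) < ⌈(r : ℚ) / ((k : ℚ) - 2)⌉} :=
  four_components_few_edges_general G r k hk hconn hreg S hc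
end

section
/- Let $r\geq 3$ be odd and let $\theta(r)$ be the largest real root of $\psi(x)=x^3+(2-r)x^2-2rx+r-1$. Then $r-\frac{1}{r+4}>\theta(r)$. -/
/-- For odd `r ≥ 3`, if `θ` is the largest real root of
`ψ(x) = x³ + (2-r)x² - 2rx + r - 1`, then `r - 1/(r+4) > θ`. -/
theorem theta_lt (r : ℕ) (hr : 3 ≤ r) (hodd : Odd r) (θ : ℝ)
    (hroot : θ ^ 3 + (2 - (r : ℝ)) * θ ^ 2 - 2 * r * θ + r - 1 = 0)
    (hmax : ∀ x : ℝ, x ^ 3 + (2 - (r : ℝ)) * x ^ 2 - 2 * r * x + r - 1 = 0 → x ≤ θ) :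
    (r : ℝ) - 1 / ((r : ℝ) + 4) > θ := by
  set R : ℝ := (r : ℝ) with hRdef
  have hR : (3 : ℝ) ≤ R := by rw [hRdef]; exact_mod_cast hr
  have hpos : (0 : ℝ) < R + 4 := by linarith
  by_contra h
  push_neg at h
  set e : ℝ := 1 / (R + 4) with hedef
  have he : e * (R + 4) = 1 := by rw [hedef]; field_simp
  have he0 : (0 : ℝ) < e := by positivity
  set t : ℝ := θ - (R - e) with htdef
  have ht : 0 ≤ t := by rw [htdef]; linarith
  have hθ : θ = R - e + t := by ring
  rw [hθ] at hroot
  have hA : R ^ 3 + 6 * R ^ 2 - 6 * R - 57 > 0 := by nlinarith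
  have hB : (R ^ 2 + 2 * R) * (R + 4) ^ 2 - 4 * R * (R + 4) - 4 * (R + 4) + 3 > 0 := by
    nlinarith
  have hC : 2 * R + 2 - 3 * e > 0 := by
    have : e ≤ 1 / 7 := by
      rw [hedef]; rw [div_le_div_iff₀ hpos (by norm_num)]; linarith
    linarith
  nlinarith [mul_pos (mul_pos he0 he0) he0, mul_pos he0 he0,
    mul_nonneg ht ht, mul_nonneg (mul_nonneg ht ht) ht,
    mul_pos hA (mul_pos (mul_pos he0 he0) he0),
    mul_nonneg (mul_nonneg hB.le (mul_pos he0 he0).le) ht,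
    mul_nonneg hC.le (mul_nonneg ht ht), he, sq_nonneg t, sq_nonneg e]
end

section
/- Let $G$ be a graph with at least one edge, $S\subset V(G)$ such that $G-S$ is disconnected, and let $X,Y$ be disjoint nonempty vertex sets with $X\cup Y=V(G)\setminus S$, no edges between $X$ and $Y$, and $|X|\leq|Y|$. Then $|S|\geq \frac{2\mu_{n-1}}{\mu_1-\mu_{n-1}}|X|$, where $\mu_1$ and $\mu_{n-1}$ are the largest Laplacian eigenvalue and the algebraic connectivity of $G$. -/
/-!
For the Laplacian `L` of a graph on `n` vertices, every `f` satisfies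
`μ_{n-1} (n‖f‖² - (∑ f)²) ≤ n fᵀLf ≤ μ₁ (n‖f‖² - (∑ f)²)`: apply the Rayleigh bounds to
`n f - (∑ f) 𝟙`, which is orthogonal to the kernel vector `𝟙`. Take `f = 𝟙_X + 𝟙_Y` and
`g = 𝟙_X - 𝟙_Y`. As no edge joins `X` and `Y`, `f` and `g` have the same Laplacian form, so with
`a = |X|`, `b = |Y|`, `s = |S|`,
`μ_{n-1} (4ab + s(a + b)) ≤ n gᵀLg = n fᵀLf ≤ μ₁ s(a + b)`,
and `2a(a + b) ≤ 4ab` (from `a ≤ b`) gives `2 μ_{n-1} a ≤ s (μ₁ - μ_{n-1})`.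
-/

open SimpleGraph

/-- The `(i+1)`-th largest eigenvalue (counted with multiplicity) of a Hermitian real
matrix; junk value `0` when out of range. -/
noncomputable def kthLargestEig {n : ℕ} (A : Matrix (Fin n) (Fin n) ℝ)
    (hA : A.IsHermitian) (i : ℕ) : ℝ :=
  if h : n - 1 - i < n then
    (hA.eigenvalues ∘ Tuple.sort hA.eigenvalues) ⟨n - 1 - i, h⟩
  else 0

lemma lapMatrix_isHermitian {n : ℕ} (G : SimpleGraph (Fin n)) [DecidableRel G.Adj] :
    (G.lapMatrix ℝ).IsHermitian :=
  (G.posSemidef_lapMatrix ℝ).1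

open Matrix

namespace Matrix.IsHermitian

section

variable {ι : Type*} [Fintype ι] [DecidableEq ι] {A : Matrix ι ι ℝ} (hA : A.IsHermitian)

lemma dotProduct_eq_sum_eigenvectorBasis (v w : ι → ℝ) :
    v ⬝ᵥ w = ∑ j, (⇑(hA.eigenvectorBasis j) ⬝ᵥ v) * (⇑(hA.eigenvectorBasis j) ⬝ᵥ w) := by
  simpa [EuclideanSpace.inner_toLp_toLp, EuclideanSpace.inner_eq_star_dotProduct,
    dotProduct_comm] using
    (hA.eigenvectorBasis.sum_inner_mul_inner (WithLp.toLp 2 v) (WithLp.toLp 2 w)).symm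

lemma eigenvectorBasis_dotProduct_mulVec (j : ι) (w : ι → ℝ) :
    ⇑(hA.eigenvectorBasis j) ⬝ᵥ (A *ᵥ w) =
      hA.eigenvalues j * (⇑(hA.eigenvectorBasis j) ⬝ᵥ w) := by
  rw [dotProduct_mulVec, ← mulVec_transpose, ← conjTranspose_eq_transpose_of_trivial, hA.eq,
    mulVec_eigenvectorBasis, smul_dotProduct, smul_eq_mul]

lemma dotProduct_mulVec_eq_sum_eigenvalues (v : ι → ℝ) :
    v ⬝ᵥ (A *ᵥ v) = ∑ j, hA.eigenvalues j * (⇑(hA.eigenvectorBasis j) ⬝ᵥ v) ^ 2 := by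
  rw [hA.dotProduct_eq_sum_eigenvectorBasis]
  refine Finset.sum_congr rfl fun j _ => ?_
  rw [eigenvectorBasis_dotProduct_mulVec]; ring

end

variable {n : ℕ} {A : Matrix (Fin n) (Fin n) ℝ} (hA : A.IsHermitian)

lemma kthLargestEig_nonneg (hP : A.PosSemidef) (i : ℕ) : 0 ≤ kthLargestEig A hA i := by
  unfold kthLargestEig
  split_ifs
  exacts [hP.eigenvalues_nonneg _, le_rfl]

lemma eigenvalues_le_kthLargestEig_zero (j : Fin n) :
    hA.eigenvalues j ≤ kthLargestEig A hA 0 := by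
  have h : n - 1 - 0 < n := by have := j.isLt; omega
  rw [kthLargestEig, dif_pos h]
  have := ((Tuple.sort hA.eigenvalues).symm j).isLt
  simpa using Tuple.monotone_sort hA.eigenvalues
    (show (Tuple.sort hA.eigenvalues).symm j ≤ ⟨n - 1 - 0, h⟩ from
      Fin.le_def.mpr (show _ ≤ n - 1 - 0 by omega))

lemma kthLargestEig_sub_two_le_eigenvalues (hn : 2 ≤ n) {j : Fin n}
    (hj : j ≠ Tuple.sort hA.eigenvalues ⟨0, by omega⟩) :
    kthLargestEig A hA (n - 2) ≤ hA.eigenvalues j := by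
  have h : n - 1 - (n - 2) < n := by omega
  rw [kthLargestEig, dif_pos h]
  have hj' : (⟨n - 1 - (n - 2), h⟩ : Fin n) ≤ (Tuple.sort hA.eigenvalues).symm j := by
    rw [Fin.le_def]
    by_contra! hlt
    apply hj
    rw [← Equiv.apply_symm_apply (Tuple.sort hA.eigenvalues) j]
    congr 1
    ext
    simp only at hlt ⊢
    omega
  simpa using Tuple.monotone_sort hA.eigenvalues hj'

theorem dotProduct_mulVec_le_kthLargestEig_zero (v : Fin n → ℝ) :
    v ⬝ᵥ (A *ᵥ v) ≤ kthLargestEig A hA 0 * (v ⬝ᵥ v) := by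
  rw [hA.dotProduct_mulVec_eq_sum_eigenvalues, hA.dotProduct_eq_sum_eigenvectorBasis v v,
    Finset.mul_sum]
  refine Finset.sum_le_sum fun j _ => ?_
  rw [← sq]
  exact mul_le_mul_of_nonneg_right (hA.eigenvalues_le_kthLargestEig_zero j) (sq_nonneg _)

theorem kthLargestEig_sub_two_mul_le (hn : 2 ≤ n) {c : ℝ} {u : Fin n → ℝ} (hu0 : u ≠ 0)
    (hu : A *ᵥ u = c • u) (hc : ∀ j, c ≤ hA.eigenvalues j) {v : Fin n → ℝ} (hv : v ⬝ᵥ u = 0) :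
    kthLargestEig A hA (n - 2) * (v ⬝ᵥ v) ≤ v ⬝ᵥ (A *ᵥ v) := by
  set μ := kthLargestEig A hA (n - 2)
  set i₀ := Tuple.sort hA.eigenvalues ⟨0, by omega⟩
  rw [hA.dotProduct_mulVec_eq_sum_eigenvalues, hA.dotProduct_eq_sum_eigenvectorBasis v v,
    Finset.mul_sum]
  rcases le_or_gt μ c with hμc | hcμ
  · refine Finset.sum_le_sum fun j _ => ?_
    rw [← sq]
    exact mul_le_mul_of_nonneg_right (hμc.trans (hc j)) (sq_nonneg _)
  -- here `c` is a simple eigenvalue: `u` is a multiple of the eigenvector `i₀`, and `v ⊥ u`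
  -- kills the `i₀`-th coordinate of `v`
  have hu_coord : ∀ j ≠ i₀, ⇑(hA.eigenvectorBasis j) ⬝ᵥ u = 0 := fun j hj => by
    have h := hA.eigenvectorBasis_dotProduct_mulVec j u
    rw [hu, dotProduct_smul, smul_eq_mul] at h
    have hcj : c < hA.eigenvalues j :=
      hcμ.trans_le (hA.kthLargestEig_sub_two_le_eigenvalues hn hj)
    have h' : (hA.eigenvalues j - c) * (⇑(hA.eigenvectorBasis j) ⬝ᵥ u) = 0 := by
      rw [sub_mul]; linarith
    exact (mul_eq_zero.mp h').resolve_left (sub_ne_zero.mpr hcj.ne')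
  have hdot_u : ∀ w : Fin n → ℝ,
      w ⬝ᵥ u = (⇑(hA.eigenvectorBasis i₀) ⬝ᵥ w) * (⇑(hA.eigenvectorBasis i₀) ⬝ᵥ u) := fun w => by
    rw [hA.dotProduct_eq_sum_eigenvectorBasis w u]
    exact Finset.sum_eq_single i₀ (fun j _ hj => by rw [hu_coord j hj, mul_zero]) (by simp)
  have hv_coord : ⇑(hA.eigenvectorBasis i₀) ⬝ᵥ v = 0 := by
    have hu_ne : ⇑(hA.eigenvectorBasis i₀) ⬝ᵥ u ≠ 0 := fun h =>
      hu0 (dotProduct_self_eq_zero.mp (by rw [hdot_u u, h, mul_zero]))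
    exact (mul_eq_zero.mp ((hdot_u v).symm.trans hv)).resolve_right hu_ne
  refine Finset.sum_le_sum fun j _ => ?_
  rcases eq_or_ne j i₀ with rfl | hj
  · simp [hv_coord]
  · rw [← sq]
    exact mul_le_mul_of_nonneg_right (hA.kthLargestEig_sub_two_le_eigenvalues hn hj) (sq_nonneg _)

end Matrix.IsHermitian

def scaledCentering {n : ℕ} (f : Fin n → ℝ) : Fin n → ℝ :=
  (n : ℝ) • f - (∑ i, f i) • 1

lemma scaledCentering_dotProduct_one {n : ℕ} (f : Fin n → ℝ) :
    scaledCentering f ⬝ᵥ 1 = 0 := by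
  rw [scaledCentering, sub_dotProduct, smul_dotProduct, smul_dotProduct, dotProduct_one,
    one_dotProduct_one, Fintype.card_fin, smul_eq_mul, smul_eq_mul]
  ring

lemma scaledCentering_dotProduct_self {n : ℕ} (f : Fin n → ℝ) :
    scaledCentering f ⬝ᵥ scaledCentering f = n * (n * (f ⬝ᵥ f) - (∑ i, f i) ^ 2) := by
  simp only [scaledCentering, sub_dotProduct, dotProduct_sub, smul_dotProduct, dotProduct_smul,
    smul_eq_mul]
  rw [dotProduct_one, one_dotProduct, one_dotProduct_one, Fintype.card_fin]
  ring

namespace SimpleGraph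

variable {n : ℕ} (G : SimpleGraph (Fin n)) [DecidableRel G.Adj]

lemma lapMatrix_mulVec_one : G.lapMatrix ℝ *ᵥ 1 = 0 :=
  G.lapMatrix_mulVec_const_eq_zero

lemma dotProduct_lapMatrix_mulVec_scaledCentering (f : Fin n → ℝ) :
    scaledCentering f ⬝ᵥ (G.lapMatrix ℝ *ᵥ scaledCentering f)
      = n ^ 2 * (f ⬝ᵥ (G.lapMatrix ℝ *ᵥ f)) := by
  have hone : 1 ⬝ᵥ (G.lapMatrix ℝ *ᵥ f) = 0 := by
    rw [dotProduct_mulVec, ← mulVec_transpose, (G.isSymm_lapMatrix (R := ℝ)).eq,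
      lapMatrix_mulVec_one, zero_dotProduct]
  simp only [scaledCentering, mulVec_sub, mulVec_smul, lapMatrix_mulVec_one, smul_zero, sub_zero,
    dotProduct_smul, sub_dotProduct, smul_dotProduct, hone, smul_eq_mul]
  ring

theorem kthLargestEig_mul_le_dotProduct_lapMatrix_mulVec (hn : 2 ≤ n) (f : Fin n → ℝ) :
    kthLargestEig (G.lapMatrix ℝ) (lapMatrix_isHermitian G) (n - 2) *
        (n * (f ⬝ᵥ f) - (∑ i, f i) ^ 2) ≤ n * (f ⬝ᵥ (G.lapMatrix ℝ *ᵥ f)) := by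
  have hn0 : (0 : ℝ) < n := by exact_mod_cast (by omega : 0 < n)
  have h := (lapMatrix_isHermitian G).kthLargestEig_sub_two_mul_le hn
    (fun h => by simpa using congrFun h ⟨0, by omega⟩)
    (by rw [lapMatrix_mulVec_one, zero_smul]) (G.posSemidef_lapMatrix ℝ).eigenvalues_nonneg
    (scaledCentering_dotProduct_one f)
  rw [scaledCentering_dotProduct_self, dotProduct_lapMatrix_mulVec_scaledCentering] at h
  nlinarith

theorem mul_dotProduct_lapMatrix_mulVec_le_kthLargestEig (f : Fin n → ℝ) :
    n * (f ⬝ᵥ (G.lapMatrix ℝ *ᵥ f)) ≤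
      kthLargestEig (G.lapMatrix ℝ) (lapMatrix_isHermitian G) 0 *
        (n * (f ⬝ᵥ f) - (∑ i, f i) ^ 2) := by
  rcases Nat.eq_zero_or_pos n with rfl | hn
  · simp
  have hn0 : (0 : ℝ) < n := by exact_mod_cast hn
  have h := (lapMatrix_isHermitian G).dotProduct_mulVec_le_kthLargestEig_zero (scaledCentering f)
  rw [scaledCentering_dotProduct_self, dotProduct_lapMatrix_mulVec_scaledCentering] at h
  nlinarith

lemma dotProduct_lapMatrix_mulVec_eq_of_adj {f g : Fin n → ℝ}
    (h : ∀ i j, G.Adj i j → (f i - f j) ^ 2 = (g i - g j) ^ 2) :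
    f ⬝ᵥ (G.lapMatrix ℝ *ᵥ f) = g ⬝ᵥ (G.lapMatrix ℝ *ᵥ g) := by
  simp only [← toLinearMap₂'_apply', lapMatrix_toLinearMap₂']
  congr 1
  refine Finset.sum_congr rfl fun i _ => Finset.sum_congr rfl fun j _ => ?_
  split_ifs with hij
  exacts [h i j hij, rfl]

open Finset in
theorem kthLargestEig_mul_le_of_forall_not_adj (hn : 2 ≤ n) {X Y : Finset (Fin n)}
    (hXY : Disjoint X Y) (hnoedge : ∀ x ∈ X, ∀ y ∈ Y, ¬ G.Adj x y) :
    kthLargestEig (G.lapMatrix ℝ) (lapMatrix_isHermitian G) (n - 2) *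
        (n * (#X + #Y) - (#X - #Y : ℝ) ^ 2) ≤
      kthLargestEig (G.lapMatrix ℝ) (lapMatrix_isHermitian G) 0 *
        ((#X + #Y) * (n - (#X + #Y))) := by
  set p : Fin n → ℝ := fun i => if i ∈ X then 1 else 0
  set q : Fin n → ℝ := fun i => if i ∈ Y then 1 else 0
  have hp : ∀ i, p i * p i = p i := fun i => by by_cases hx : i ∈ X <;> simp [p, hx]
  have hq : ∀ i, q i * q i = q i := fun i => by by_cases hy : i ∈ Y <;> simp [q, hy]
  have hpq : ∀ i, p i * q i = 0 := fun i => by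
    by_cases hx : i ∈ X
    · simp [p, q, hx, Finset.disjoint_left.mp hXY hx]
    · simp [p, hx]
  have hpq_adj : ∀ i j, G.Adj i j → p i * q j = 0 := fun i j hij => by
    by_cases hx : i ∈ X
    · have hy : j ∉ Y := fun hy => hnoedge i hx j hy hij
      simp [p, q, hx, hy]
    · simp [p, hx]
  have hlap : (p + q) ⬝ᵥ (G.lapMatrix ℝ *ᵥ (p + q)) = (p - q) ⬝ᵥ (G.lapMatrix ℝ *ᵥ (p - q)) :=
    G.dotProduct_lapMatrix_mulVec_eq_of_adj fun i j hij => by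
      simp only [Pi.add_apply, Pi.sub_apply]
      linear_combination 4 * (hpq i - hpq_adj i j hij - hpq_adj j i hij.symm + hpq j)
  have hsum_p : ∑ i, p i = #X := by simp [p]
  have hsum_q : ∑ i, q i = #Y := by simp [q]
  have hnorm_add : (p + q) ⬝ᵥ (p + q) = #X + #Y := by
    rw [← hsum_p, ← hsum_q, ← Finset.sum_add_distrib]
    refine Finset.sum_congr rfl fun i _ => ?_
    simp only [Pi.add_apply]
    linear_combination hp i + hq i + 2 * hpq i
  have hnorm_sub : (p - q) ⬝ᵥ (p - q) = #X + #Y := by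
    rw [← hsum_p, ← hsum_q, ← Finset.sum_add_distrib]
    refine Finset.sum_congr rfl fun i _ => ?_
    simp only [Pi.sub_apply]
    linear_combination hp i + hq i - 2 * hpq i
  calc kthLargestEig (G.lapMatrix ℝ) (lapMatrix_isHermitian G) (n - 2) *
          (n * (#X + #Y) - (#X - #Y : ℝ) ^ 2)
      = kthLargestEig (G.lapMatrix ℝ) (lapMatrix_isHermitian G) (n - 2) *
          (n * ((p - q) ⬝ᵥ (p - q)) - (∑ i, (p - q) i) ^ 2) := by
        simp only [hnorm_sub, Pi.sub_apply, Finset.sum_sub_distrib, hsum_p, hsum_q]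
    _ ≤ n * ((p - q) ⬝ᵥ (G.lapMatrix ℝ *ᵥ (p - q))) :=
        G.kthLargestEig_mul_le_dotProduct_lapMatrix_mulVec hn _
    _ = n * ((p + q) ⬝ᵥ (G.lapMatrix ℝ *ᵥ (p + q))) := by rw [hlap]
    _ ≤ kthLargestEig (G.lapMatrix ℝ) (lapMatrix_isHermitian G) 0 *
          (n * ((p + q) ⬝ᵥ (p + q)) - (∑ i, (p + q) i) ^ 2) :=
        G.mul_dotProduct_lapMatrix_mulVec_le_kthLargestEig _
    _ = kthLargestEig (G.lapMatrix ℝ) (lapMatrix_isHermitian G) 0 *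
          ((#X + #Y) * (n - (#X + #Y))) := by
        simp only [hnorm_add, Pi.add_apply, Finset.sum_add_distrib, hsum_p, hsum_q]
        ring

end SimpleGraph

lemma two_mul_div_sub_mul_le {μ M a b s : ℝ} (hμ : 0 ≤ μ) (ha : 0 < a) (hab : a ≤ b)
    (hs : 0 ≤ s) (h : μ * ((a + b + s) * (a + b) - (a - b) ^ 2) ≤ M * ((a + b) * s)) :
    2 * μ / (M - μ) * a ≤ s := by
  have key : 2 * μ * a ≤ s * (M - μ) := by
    have : (a + b) * (2 * μ * a - s * (M - μ)) ≤ 0 := by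
      nlinarith [mul_nonneg (mul_nonneg hμ ha.le) (sub_nonneg.mpr hab)]
    nlinarith
  rcases le_or_gt (M - μ) 0 with hle | hlt
  · exact (mul_nonpos_of_nonpos_of_nonneg (div_nonpos_of_nonneg_of_nonpos (by positivity) hle)
      ha.le).trans hs
  · rw [div_mul_eq_mul_div, div_le_iff₀ hlt]
    linarith

theorem cut_size_lower_bound_general {n : ℕ} (G : SimpleGraph (Fin n)) [DecidableRel G.Adj]
    (S X Y : Finset (Fin n))
    (hX : X.Nonempty) (hXY : Disjoint X Y)
    (hunion : (X : Set (Fin n)) ∪ Y = (↑S : Set (Fin n))ᶜ)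
    (hnoedge : ∀ x ∈ X, ∀ y ∈ Y, ¬ G.Adj x y) (hcard : X.card ≤ Y.card) :
    2 * kthLargestEig (G.lapMatrix ℝ) (lapMatrix_isHermitian G) (n - 2) /
        (kthLargestEig (G.lapMatrix ℝ) (lapMatrix_isHermitian G) 0 -
          kthLargestEig (G.lapMatrix ℝ) (lapMatrix_isHermitian G) (n - 2)) * X.card ≤
      (S.card : ℝ) := by
  have hcompl : X ∪ Y = Sᶜ := by rwa [← Finset.coe_inj, Finset.coe_union, Finset.coe_compl]
  have hcard_sum : X.card + Y.card + S.card = n := by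
    rw [← Finset.card_union_of_disjoint hXY, hcompl, Finset.card_compl_add_card, Fintype.card_fin]
  have hX_pos := hX.card_pos
  have hn : (n : ℝ) = X.card + Y.card + S.card := by exact_mod_cast hcard_sum.symm
  have h := G.kthLargestEig_mul_le_of_forall_not_adj (by omega) hXY hnoedge
  rw [hn, add_sub_cancel_left] at h
  exact two_mul_div_sub_mul_le ((lapMatrix_isHermitian G).kthLargestEig_nonneg
    (G.posSemidef_lapMatrix ℝ) _) (by exact_mod_cast hX_pos) (by exact_mod_cast hcard)
    (Nat.cast_nonneg _) h

/-- Gu–Liu: if `S` is a vertex cut of `G` separating `X` from `Y` with `|X| ≤ |Y|`, then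
`|S| ≥ (2μ_{n-1}/(μ₁ - μ_{n-1}))|X|`, where `μ₁` and `μ_{n-1}` are the largest Laplacian
eigenvalue and the algebraic connectivity of `G`. -/
theorem cut_size_lower_bound {n : ℕ} (G : SimpleGraph (Fin n)) [DecidableRel G.Adj]
    (hE : G.edgeSet.Nonempty) (S X Y : Finset (Fin n))
    (hSsub : (S : Set (Fin n)) ⊂ Set.univ)
    (hdisc : ¬ (SimpleGraph.induce ((↑S : Set (Fin n))ᶜ) G).Connected)
    (hX : X.Nonempty) (hY : Y.Nonempty) (hXY : Disjoint X Y)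
    (hunion : (X : Set (Fin n)) ∪ Y = (↑S : Set (Fin n))ᶜ)
    (hnoedge : ∀ x ∈ X, ∀ y ∈ Y, ¬ G.Adj x y) (hcard : X.card ≤ Y.card) :
    2 * kthLargestEig (G.lapMatrix ℝ) (lapMatrix_isHermitian G) (n - 2) /
        (kthLargestEig (G.lapMatrix ℝ) (lapMatrix_isHermitian G) 0 -
          kthLargestEig (G.lapMatrix ℝ) (lapMatrix_isHermitian G) (n - 2)) * X.card ≤
      (S.card : ℝ) :=
  cut_size_lower_bound_general G S X Y hX hXY hunion hnoedge hcard
end
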